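/- Let [a,b] be a proper interval in S^d (i.e., no element strictly between a and b has length equal to l(a) or l(b)) with l(a) = l(b). Then [a,b] contains an odd number of flat steps, where a step [c, s(c)] (for a ⪯ c ≺ b) is flat if l(c) = l(s(c)). -/

import Mathlib

open SimpleGraph

/-- Sorted list of the tuple set `S^d`: tuples with entries in {1,3} except
the last entry which is in {1,2,3,4}, of length between 1 and `d`,
listed in lexicographic order. -/
def Tl : ℕ → List (List ℕ)
  | 0 => []
  | k+1 => [[1]] ++ (Tl k).map (fun a => 1 :: a) ++ [[2], [3]]
            ++ (Tl k).map (fun a => 3 :: a) ++ [[4]]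

/-- Strict lexicographic order on tuples (a proper prefix is smaller). -/
def lexLt (a b : List ℕ) : Prop := List.Lex (· < ·) a b

def lexLe (a b : List ℕ) : Prop := a = b ∨ lexLt a b

/-- `v` is the successor of `u` in the lexicographic order on `S^d`. -/
def IsSucc (d : ℕ) (u v : List ℕ) : Prop :=
  v ∈ Tl d ∧ lexLt u v ∧ ∀ w ∈ Tl d, lexLt u w → lexLe v w

/-- The interval `[a,b]` in `S^d`. -/
def interval (d : ℕ) (a b : List ℕ) : Set (List ℕ) :=
  {c | c ∈ Tl d ∧ lexLe a c ∧ lexLe c b}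

/-- `[a,b]` is a proper interval: no interior element has length `l(a)` or `l(b)`. -/
def ProperInterval (d : ℕ) (a b : List ℕ) : Prop :=
  a ∈ Tl d ∧ b ∈ Tl d ∧ lexLe a b ∧
  ∀ c ∈ interval d a b, c ≠ a → c ≠ b →
    c.length ≠ a.length ∧ c.length ≠ b.length

/-- The set of left endpoints of flat steps of the interval `[a,b]`. -/
def flatSteps (d : ℕ) (a b : List ℕ) : Set (List ℕ) :=
  {c | c ∈ Tl d ∧ lexLe a c ∧ lexLt c b ∧ ∃ v, IsSucc d c v ∧ v.length = c.length}

/-- Vertices of `G_d`: elements of `S^d`, subdivision vertices, and centers. -/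
inductive Vtx where
  | elt : List ℕ → Vtx
  | sub : ℕ → Fin 2 → Vtx
  | ctr : ℕ → Vtx
deriving DecidableEq

/-- The path `P_d` as a list of vertices: the elements of `S^d` in order,
with two subdivision vertices between consecutive elements of equal length
and one otherwise. -/
def pathList (d : ℕ) : List Vtx :=
  (((Tl d).zipIdx).map (fun q => (q.2, q.1))).flatMap (fun p =>
    Vtx.elt p.2 :: (match (Tl d)[p.1 + 1]? with
      | none => []
      | some b =>
        if p.2.length = b.length then [Vtx.sub p.1 0, Vtx.sub p.1 1]
        else [Vtx.sub p.1 0]))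

/-- `x` and `y` are consecutive in the list `l`. -/
def ChainAdj {α : Type} (l : List α) (x y : α) : Prop :=
  ∃ i, (l[i]? = some x ∧ l[i+1]? = some y) ∨
       (l[i]? = some y ∧ l[i+1]? = some x)

/-- Adjacency from a center vertex. -/
def ctrAdj (d : ℕ) : Vtx → Vtx → Prop
  | Vtx.ctr k, Vtx.ctr m => k ≠ m ∧ 1 ≤ k ∧ k ≤ d ∧ 1 ≤ m ∧ m ≤ d
  | Vtx.ctr k, Vtx.elt a => 1 ≤ k ∧ k ≤ d ∧ a ∈ Tl d ∧ a.length = k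
  | _, _ => False

/-- The vertex set of `G_d`. -/
def VSet (d : ℕ) : Finset Vtx :=
  (pathList d).toFinset ∪ (Finset.Icc 1 d).image Vtx.ctr

def GdAdj (d : ℕ) (x y : Vtx) : Prop :=
  x ≠ y ∧ (ChainAdj (pathList d) x y ∨ ctrAdj d x y ∨ ctrAdj d y x)

/-- The graph `G_d`. -/
def Gd (d : ℕ) : SimpleGraph {x // x ∈ VSet d} where
  Adj x y := GdAdj d x.1 y.1
  symm := ⟨by
    rintro x y ⟨hne, h⟩
    refine ⟨hne.symm, ?_⟩
    rcases h with ⟨i, hi⟩ | h | h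
    · exact Or.inl ⟨i, hi.symm⟩
    · exact Or.inr (Or.inr h)
    · exact Or.inr (Or.inl h)⟩
  loopless := ⟨fun x h => h.1 rfl⟩

/-- A rank decomposition of a graph `G`: a finite cubic tree together with a
bijection from the vertices of `G` to the leaves of the tree. -/
structure RankDecomp {V : Type} [Fintype V] (G : SimpleGraph V) where
  t : Type
  fin : Fintype t
  tree : SimpleGraph t
  conn : tree.Connected
  acyc : tree.IsAcyclic
  two_le : 2 ≤ Nat.card t
  cubic : ∀ v : t, (tree.neighborSet v).ncard = 1 ∨ (tree.neighborSet v).ncard = 3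
  leafEquiv : V ≃ {v : t // (tree.neighborSet v).ncard = 1}

/-- The set of vertices of `G` whose leaf lies on the side of `a` of
the edge `ab` of the decomposition tree. -/
def RankDecomp.side {V : Type} [Fintype V] {G : SimpleGraph V}
    (D : RankDecomp G) (a b : D.t) : Set V :=
  {x | (D.tree.deleteEdges {s(a, b)}).Reachable (D.leafEquiv x).1 a}

/-- The cutrank function of `G`: the GF(2)-rank of the adjacency submatrix
between `X` and its complement. -/
noncomputable def cutRank {V : Type} [Fintype V] (G : SimpleGraph V) (X : Set V) : ℕ :=
  haveI : Fintype ↥X := Fintype.ofFinite _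
  haveI : Fintype ↥(Xᶜ) := Fintype.ofFinite _
  haveI : DecidableRel G.Adj := Classical.decRel _
  Matrix.rank (Matrix.of (fun (x : ↥X) (y : ↥(Xᶜ)) =>
    if G.Adj x.1 y.1 then (1 : ZMod 2) else 0))

/-- The decomposition `D` has width at most `k`. -/
def RankDecomp.WidthLE {V : Type} [Fintype V] {G : SimpleGraph V}
    (D : RankDecomp G) (k : ℕ) : Prop :=
  ∀ a b : D.t, D.tree.Adj a b → cutRank G (D.side a b) ≤ k

/-- The rank-width of `G`. -/
noncomputable def rankwidth {V : Type} [Fintype V] (G : SimpleGraph V) : ℕ :=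
  sInf {k | ∃ D : RankDecomp G, D.WidthLE k}

/-- `l` is an induced path in `G`: its vertices are distinct and two of them
are adjacent in `G` iff they are consecutive on `l`. -/
def IsInducedPathList {V : Type} (G : SimpleGraph V) (l : List V) : Prop :=
  l.Nodup ∧ ∀ x ∈ l, ∀ y ∈ l, (G.Adj x y ↔ ChainAdj l x y)

/-- The diamond: the complete graph on four vertices minus an edge. -/
def diamond : SimpleGraph (Fin 4) := (⊤ : SimpleGraph (Fin 4)).deleteEdges {s(2, 3)}

/-!
Consecutive elements `x, s(x)` of `S^d` are related in one of three ways: a step up lengthens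
the tuple by one, from a tuple ending in 1 or 3 to one ending in 1; a flat step raises the last
entry by one; a step down shortens the tuple by one, from a tuple ending in 4 to one ending in
2 or 4. So a step is flat exactly when the last entries of its ends have different parities, and
the number of flat steps of `[a,b]` has the parity of `last(a) + last(b)`.

If `[a,b]` is proper with `l(a) = l(b)`, the lengths strictly inside never reach `l(a)` and change
by at most one per step, so they stay on one side of `l(a)`. Either `[a,b]` is a single flat step,
or it goes up from a tuple ending in 1 or 3 and comes down to one ending in 2 or 4, or it goes down
from a tuple ending in 4 and comes up to one ending in 1. In every case `last(a) + last(b)` is odd.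
-/

open Finset

def lastEntry (x : List ℕ) : ℕ := x.getLastD 0

lemma lastEntry_cons {x : List ℕ} (hx : x ≠ []) (k : ℕ) : lastEntry (k :: x) = lastEntry x := by
  obtain ⟨y, t, rfl⟩ := List.exists_cons_of_ne_nil hx
  simp [lastEntry, List.getLastD_eq_getLast?, List.getLast?_cons_cons]

def StepShape (x y : List ℕ) : Prop :=
  x ≠ [] ∧ y ≠ [] ∧
    ((y.length = x.length + 1 ∧ lastEntry y = 1 ∧ lastEntry x % 2 = 1) ∨
     (y.length = x.length ∧ lastEntry y = lastEntry x + 1) ∨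
     (x.length = y.length + 1 ∧ lastEntry x = 4 ∧ lastEntry y % 2 = 0))

namespace StepShape

variable {x y : List ℕ}

lemma cons (h : StepShape x y) (k : ℕ) : StepShape (k :: x) (k :: y) := by
  obtain ⟨hx, hy, h⟩ := h
  refine ⟨List.cons_ne_nil _ _, List.cons_ne_nil _ _, ?_⟩
  simp only [lastEntry_cons hx, lastEntry_cons hy, List.length_cons]
  omega

lemma length_le (h : StepShape x y) : y.length ≤ x.length + 1 ∧ x.length ≤ y.length + 1 := by
  obtain ⟨-, -, h⟩ := h
  omega

lemma length_eq_iff_odd (h : StepShape x y) :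
    y.length = x.length ↔ Odd (lastEntry x + lastEntry y) := by
  obtain ⟨-, -, h⟩ := h
  rw [Nat.odd_iff]
  omega

end StepShape

-- The seven pairs are the consecutive elements of `Tl` not obtained by prefixing a common entry.
lemma isChain_Tl {R : List ℕ → List ℕ → Prop} (hcons : ∀ k x y, R x y → R (k :: x) (k :: y))
    (h₁₂ : R [1] [2]) (h₂₃ : R [2] [3]) (h₃₄ : R [3] [4])
    (h₁₁₁ : R [1] [1, 1]) (h₁₄₂ : R [1, 4] [2]) (h₃₃₁ : R [3] [3, 1]) (h₃₄₄ : R [3, 4] [4]) :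
    ∀ d, (Tl d).IsChain R
  | 0 => .nil
  | 1 => .cons_cons h₁₂ (.cons_cons h₂₃ (.cons_cons h₃₄ (.singleton _)))
  | d + 2 => by
    have hhead : (Tl (d + 1)).head? = some [1] := rfl
    have hlast : (Tl (d + 1)).getLast? = some [4] := List.getLast?_concat
    have hmap (k : ℕ) : ((Tl (d + 1)).map (k :: ·)).IsChain R :=
      List.isChain_map_of_isChain _ (hcons k) (isChain_Tl hcons h₁₂ h₂₃ h₃₄ h₁₁₁ h₁₄₂ h₃₃₁ h₃₄₄ _)
    rw [Tl]
    simp only [List.isChain_append, List.getLast?_append,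
      List.head?_map, List.getLast?_map, hhead, hlast]
    refine ⟨⟨⟨⟨.singleton _, hmap 1, ?_⟩, ?_, ?_⟩, hmap 3, ?_⟩, .singleton _, ?_⟩ <;>
      simp [Option.or, *]

lemma Tl_isChain_stepShape (d : ℕ) : (Tl d).IsChain StepShape := by
  apply isChain_Tl fun k _ _ h => h.cons k <;> simp [StepShape, lastEntry]

lemma Tl_sortedLT (d : ℕ) : (Tl d).SortedLT := by
  rw [List.sortedLT_iff_isChain]
  apply isChain_Tl fun _ _ _ h => List.Lex.cons h <;> decide

lemma lexLe_iff_le {x y : List ℕ} : lexLe x y ↔ x ≤ y := le_iff_eq_or_lt.symm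

lemma lt_iff_lt_of_forall_ne_of_steps_le_one {g : ℕ → ℕ} {L m n : ℕ} (hmn : m ≤ n)
    (hstep : ∀ i, m ≤ i → i < n → g (i + 1) ≤ g i + 1 ∧ g i ≤ g (i + 1) + 1)
    (hne : ∀ i, m ≤ i → i ≤ n → g i ≠ L) : L < g n ↔ L < g m := by
  induction n, hmn using Nat.le_induction with
  | base => rfl
  | succ n hmn ih =>
    have := hstep n hmn n.lt_succ_self
    have := hne (n + 1) (by omega) le_rfl
    have := hne n hmn n.le_succ
    rw [← ih (fun i hi hin => hstep i hi (by omega)) (fun i hi hin => hne i hi (by omega))]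
    omega

section FlatCount

variable {f : ℕ → List ℕ} {m n : ℕ}

lemma card_flat_modEq (hmn : m ≤ n) (hstep : ∀ i, m ≤ i → i < n → StepShape (f i) (f (i + 1))) :
    #{i ∈ Ico m n | (f (i + 1)).length = (f i).length} ≡
      lastEntry (f m) + lastEntry (f n) [MOD 2] := by
  induction n, hmn using Nat.le_induction with
  | base => simp only [Ico_self, filter_empty, card_empty, Nat.ModEq]; omega
  | succ n hmn ih =>
    have ih := ih fun i hi hin => hstep i hi (by omega)
    have hflat := (hstep n hmn n.lt_succ_self).length_eq_iff_odd
    rw [Nat.odd_iff] at hflat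
    rw [card_filter, sum_Ico_succ_top hmn, ← card_filter]
    unfold Nat.ModEq at *
    split_ifs with h <;> omega

lemma odd_lastEntry_add_of_forall_length_ne (hmn : m < n)
    (hstep : ∀ i, m ≤ i → i < n → StepShape (f i) (f (i + 1)))
    (hlen : (f n).length = (f m).length)
    (hint : ∀ i, m < i → i < n → (f i).length ≠ (f m).length) :
    Odd (lastEntry (f m) + lastEntry (f n)) := by
  rw [Nat.odd_iff]
  obtain ⟨k, rfl⟩ : ∃ k, n = k + 1 := ⟨n - 1, by omega⟩
  obtain ⟨-, -, hfirst⟩ := hstep m le_rfl hmn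
  obtain ⟨-, -, hlast⟩ := hstep k (by omega) k.lt_succ_self
  rcases (Nat.le_of_lt_succ hmn).eq_or_lt with rfl | hmk
  · omega
  have hside : (f m).length < (f k).length ↔ (f m).length < (f (m + 1)).length :=
    lt_iff_lt_of_forall_ne_of_steps_le_one (g := fun i => (f i).length) hmk
      (fun i hi hik => (hstep i (by omega) (by omega)).length_le)
      (fun i hi hik => hint i (by omega) (by omega))
  have := hint (m + 1) (by omega) (by omega)
  have := hint k hmk (by omega)
  omega

theorem odd_card_flat (hmn : m < n) (hstep : ∀ i, m ≤ i → i < n → StepShape (f i) (f (i + 1)))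
    (hlen : (f n).length = (f m).length)
    (hint : ∀ i, m < i → i < n → (f i).length ≠ (f m).length) :
    Odd #{i ∈ Ico m n | (f (i + 1)).length = (f i).length} :=
  Nat.odd_iff.mpr <| Eq.trans (card_flat_modEq hmn.le hstep)
    (Nat.odd_iff.mp (odd_lastEntry_add_of_forall_length_ne hmn hstep hlen hint))

end FlatCount

def tupleAt (d i : ℕ) : List ℕ := (Tl d).getD i []

section TupleAt

variable {d i j m n : ℕ}

lemma tupleAt_eq_getElem (h : i < (Tl d).length) : tupleAt d i = (Tl d)[i] :=
  List.getD_eq_getElem _ _ h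

lemma tupleAt_mem (h : i < (Tl d).length) : tupleAt d i ∈ Tl d := by
  rw [tupleAt_eq_getElem h]
  exact List.getElem_mem h

lemma exists_tupleAt_eq {x : List ℕ} (hx : x ∈ Tl d) : ∃ i < (Tl d).length, tupleAt d i = x := by
  obtain ⟨i, hi, rfl⟩ := List.getElem_of_mem hx
  exact ⟨i, hi, tupleAt_eq_getElem hi⟩

lemma tupleAt_lt_tupleAt_iff (hi : i < (Tl d).length) (hj : j < (Tl d).length) :
    tupleAt d i < tupleAt d j ↔ i < j := by
  rw [tupleAt_eq_getElem hi, tupleAt_eq_getElem hj]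
  exact (Tl_sortedLT d).getElem_lt_getElem_iff

lemma tupleAt_le_tupleAt_iff (hi : i < (Tl d).length) (hj : j < (Tl d).length) :
    tupleAt d i ≤ tupleAt d j ↔ i ≤ j := by
  rw [tupleAt_eq_getElem hi, tupleAt_eq_getElem hj]
  exact (Tl_sortedLT d).getElem_le_getElem_iff

lemma tupleAt_inj (hi : i < (Tl d).length) (hj : j < (Tl d).length) :
    tupleAt d i = tupleAt d j ↔ i = j := by
  simp only [le_antisymm_iff, tupleAt_le_tupleAt_iff hi hj, tupleAt_le_tupleAt_iff hj hi]

lemma stepShape_tupleAt (h : i + 1 < (Tl d).length) :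
    StepShape (tupleAt d i) (tupleAt d (i + 1)) := by
  rw [tupleAt_eq_getElem h, tupleAt_eq_getElem (by omega)]
  exact List.isChain_iff_getElem.mp (Tl_isChain_stepShape d) i h

lemma isSucc_tupleAt_iff (h : i + 1 < (Tl d).length) {v : List ℕ} :
    IsSucc d (tupleAt d i) v ↔ v = tupleAt d (i + 1) := by
  have hi : i < (Tl d).length := by omega
  constructor
  · rintro ⟨hv, hiv, hmin⟩
    obtain ⟨j, hj, rfl⟩ := exists_tupleAt_eq hv
    have hij : i < j := (tupleAt_lt_tupleAt_iff hi hj).mp hiv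
    have hji : j ≤ i + 1 := (tupleAt_le_tupleAt_iff hj h).mp <| lexLe_iff_le.mp <|
      hmin _ (tupleAt_mem h) ((tupleAt_lt_tupleAt_iff hi h).mpr i.lt_succ_self)
    rw [tupleAt_inj hj h]
    omega
  · rintro rfl
    refine ⟨tupleAt_mem h, (tupleAt_lt_tupleAt_iff hi h).mpr i.lt_succ_self, fun w hw hiw => ?_⟩
    obtain ⟨j, hj, rfl⟩ := exists_tupleAt_eq hw
    exact lexLe_iff_le.mpr <| (tupleAt_le_tupleAt_iff h hj).mpr <|
      (tupleAt_lt_tupleAt_iff hi hj).mp hiw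

lemma tupleAt_mem_interval_iff (hm : m < (Tl d).length) (hi : i < (Tl d).length)
    (hn : n < (Tl d).length) :
    tupleAt d i ∈ interval d (tupleAt d m) (tupleAt d n) ↔ m ≤ i ∧ i ≤ n := by
  simp only [interval, Set.mem_ofPred_eq, lexLe_iff_le, tupleAt_le_tupleAt_iff hm hi,
    tupleAt_le_tupleAt_iff hi hn, tupleAt_mem hi, true_and]

lemma ncard_flatSteps_tupleAt (hm : m < (Tl d).length) (hn : n < (Tl d).length) :
    (flatSteps d (tupleAt d m) (tupleAt d n)).ncard =
      #{i ∈ Ico m n | (tupleAt d (i + 1)).length = (tupleAt d i).length} := by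
  have hflat : flatSteps d (tupleAt d m) (tupleAt d n) =
      tupleAt d '' ↑{i ∈ Ico m n | (tupleAt d (i + 1)).length = (tupleAt d i).length} := by
    ext c
    simp only [flatSteps, Set.mem_ofPred_eq, Set.mem_image, coe_filter, mem_Ico]
    constructor
    · rintro ⟨hc, hmc, hcn, v, hv, hlen⟩
      obtain ⟨i, hi, rfl⟩ := exists_tupleAt_eq hc
      have hin : i < n := (tupleAt_lt_tupleAt_iff hi hn).mp hcn
      rw [isSucc_tupleAt_iff (by omega)] at hv
      exact ⟨i, ⟨⟨(tupleAt_le_tupleAt_iff hm hi).mp (lexLe_iff_le.mp hmc), hin⟩, hv ▸ hlen⟩, rfl⟩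
    · rintro ⟨i, ⟨⟨hmi, hin⟩, hlen⟩, rfl⟩
      have hi : i < (Tl d).length := hin.trans hn
      exact ⟨tupleAt_mem hi, lexLe_iff_le.mpr ((tupleAt_le_tupleAt_iff hm hi).mpr hmi),
        (tupleAt_lt_tupleAt_iff hi hn).mpr hin, _, (isSucc_tupleAt_iff (by omega)).mpr rfl, hlen⟩
  have hinj : Set.InjOn (tupleAt d)
      ↑{i ∈ Ico m n | (tupleAt d (i + 1)).length = (tupleAt d i).length} := by
    intro i hi j hj hij
    simp only [coe_filter, mem_Ico, Set.mem_ofPred_eq] at hi hj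
    exact (tupleAt_inj (by omega) (by omega)).mp hij
  rw [hflat, hinj.ncard_image, Set.ncard_coe_finset]

end TupleAt

/-- A proper interval `[a,b]` with `l(a) = l(b)` contains an odd
number of flat steps. -/
theorem stmt6 (d : ℕ) (a b : List ℕ) (hab : a ≠ b)
    (hp : ProperInterval d a b) (hl : a.length = b.length) :
    Odd (flatSteps d a b).ncard := by
  obtain ⟨haT, hbT, hle, hproper⟩ := hp
  obtain ⟨m, hm, rfl⟩ := exists_tupleAt_eq haT
  obtain ⟨n, hn, rfl⟩ := exists_tupleAt_eq hbT
  have hmn : m < n :=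
    (tupleAt_lt_tupleAt_iff hm hn).mp (lt_of_le_of_ne (lexLe_iff_le.mp hle) hab)
  rw [ncard_flatSteps_tupleAt hm hn]
  refine odd_card_flat hmn (fun i _ hi => stepShape_tupleAt (by omega)) hl.symm
    fun i hmi hin => ?_
  have hi : i < (Tl d).length := hin.trans hn
  refine (hproper _ ((tupleAt_mem_interval_iff hm hi hn).mpr ⟨hmi.le, hin.le⟩) ?_ ?_).1
  · rw [Ne, tupleAt_inj hi hm]
    omega
  · rw [Ne, tupleAt_inj hi hn]
    omega
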